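/- For all nonnegative integers m, n and complex z₁, z₂, q: z₁^m z₂^n = Σ_{k=0}^{min(m,n)} [m choose k]_q [n choose k]_q (q;q)_k H_{m-k,n-k}(z₁, z₂ | q). -/

import Mathlib

/-!
Expanding each `H2D` and collecting the double sum by `s = k + j`, the identities
`[m,k] [m-k,j] = [m,s] [s,k]` and `[s,k] (q;q)_k (q;q)_j = (q;q)_s` turn the coefficient of
`z1^(m-s) z2^(n-s)` into `[m,s] [n,s] (q;q)_s ∑_k [s,k] (-1)^(s-k) q^C(s-k,2)`. By Rothe's
q-binomial theorem the inner sum is `∏_{i<s} (1 - q^i)`, which vanishes unless `s = 0`.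
-/

open Finset Filter

noncomputable def qPoch (a q : ℂ) (n : ℕ) : ℂ :=
  ∏ j ∈ Finset.range n, (1 - a * q ^ j)

noncomputable def qbinom (q : ℂ) : ℕ → ℕ → ℂ
  | _, 0 => 1
  | 0, _ + 1 => 0
  | m + 1, k + 1 => qbinom q m k + q ^ (k + 1) * qbinom q m (k + 1)

/-- The first q-analogue of the 2D Hermite polynomials. -/
noncomputable def H2D (q z1 z2 : ℂ) (m n : ℕ) : ℂ :=
  ∑ k ∈ Finset.range (min m n + 1),
    qbinom q m k * qbinom q n k * (-1) ^ k * q ^ (k.choose 2) * qPoch q q k *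
      z1 ^ (m - k) * z2 ^ (n - k)

/-- The second q-analogue of the 2D Hermite polynomials. -/
noncomputable def h2D (q z1 z2 : ℂ) (m n : ℕ) : ℂ :=
  ∑ j ∈ Finset.range (min m n + 1),
    qbinom q m j * qbinom q n j * q ^ ((m - j) * (n - j)) * (-1) ^ j * qPoch q q j *
      z1 ^ (m - j) * z2 ^ (n - j)

/-- The q-2D ultraspherical (q-disk / q-Zernike) polynomials. -/
noncomputable def p2D (q b z1 z2 : ℂ) (m n : ℕ) : ℂ :=
  ∑ k ∈ Finset.range (min m n + 1),
    qbinom q m k * qbinom q n k * (-1) ^ k * q ^ (k.choose 2) * qPoch q q k *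
      qPoch (b * q) q (m + n - k) * z1 ^ (m - k) * z2 ^ (n - k)

/-- The infinite q-Pochhammer product (a;q)_∞. -/
noncomputable def qPochInf (a q : ℂ) : ℂ :=
  ∏' j : ℕ, (1 - a * q ^ j)

section QBinomial

variable (q : ℂ)

@[simp]
lemma qPoch_zero (a : ℂ) : qPoch a q 0 = 1 :=
  prod_range_zero _

lemma qPoch_succ (a : ℂ) (n : ℕ) : qPoch a q (n + 1) = qPoch a q n * (1 - a * q ^ n) :=
  prod_range_succ _ _

@[simp]
lemma qbinom_zero_right (m : ℕ) : qbinom q m 0 = 1 := by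
  cases m <;> rfl

lemma qbinom_succ_succ (m k : ℕ) :
    qbinom q (m + 1) (k + 1) = qbinom q m k + q ^ (k + 1) * qbinom q m (k + 1) :=
  rfl

lemma qbinom_eq_zero_of_lt {m k : ℕ} (h : m < k) : qbinom q m k = 0 := by
  obtain ⟨k, rfl⟩ := Nat.exists_eq_add_one_of_ne_zero (by omega : k ≠ 0)
  induction m generalizing k with
  | zero => rfl
  | succ m ih =>
    obtain ⟨k, rfl⟩ := Nat.exists_eq_add_one_of_ne_zero (by omega : k ≠ 0)
    rw [qbinom_succ_succ, ih k (by omega), ih (k + 1) (by omega)]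
    ring

@[simp]
lemma qbinom_self (m : ℕ) : qbinom q m m = 1 := by
  induction m with
  | zero => rfl
  | succ m ih => rw [qbinom_succ_succ, ih, qbinom_eq_zero_of_lt q (Nat.lt_succ_self m)]; ring

lemma qbinom_mul_qbinom_sub (m k j : ℕ) :
    qbinom q m k * qbinom q (m - k) j = qbinom q m (k + j) * qbinom q (k + j) k := by
  induction m generalizing k j with
  | zero => cases k <;> cases j <;> simp [qbinom_eq_zero_of_lt]
  | succ m ih =>
    rcases k with _ | k
    · simp
    rcases j with _ | j
    · simp
    rw [Nat.add_sub_add_right, show k + 1 + (j + 1) = k + j + 1 + 1 by omega]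
    rcases Nat.lt_or_ge k m with hkm | hmk
    · obtain ⟨t, rfl⟩ : ∃ t, m = k + 1 + t := ⟨m - (k + 1), by omega⟩
      have h1 := ih k (j + 1)
      have h2 := ih (k + 1) j
      have h3 := ih (k + 1) (j + 1)
      simp only [Nat.add_sub_cancel_left, show k + 1 + t - k = t + 1 by omega,
        show k + (j + 1) = k + j + 1 by omega, show k + 1 + j = k + j + 1 by omega,
        show k + 1 + (j + 1) = k + j + 1 + 1 by omega] at h1 h2 h3
      rw [qbinom_succ_succ q t j] at h1
      rw [qbinom_succ_succ q (k + j + 1) k] at h3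
      rw [show k + 1 + t - k = t + 1 by omega, qbinom_succ_succ q (k + 1 + t) k,
        qbinom_succ_succ q t j, qbinom_succ_succ q (k + j + 1) k,
        qbinom_succ_succ q (k + 1 + t) (k + j + 1)]
      linear_combination h1 + q ^ (k + 1) * h2 + q ^ (k + 1) * q ^ (j + 1) * h3
    · rw [Nat.sub_eq_zero_of_le hmk, qbinom_eq_zero_of_lt q (Nat.succ_pos j),
        qbinom_eq_zero_of_lt q (show m + 1 < k + j + 1 + 1 by omega)]
      ring

lemma qbinom_mul_qPoch_mul_qPoch {m k : ℕ} (hk : k ≤ m) :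
    qbinom q m k * qPoch q q k * qPoch q q (m - k) = qPoch q q m := by
  induction m generalizing k with
  | zero => simp [Nat.le_zero.mp hk]
  | succ m ih =>
    rcases k with _ | k
    · simp
    rcases Nat.lt_or_ge k m with hkm | hmk
    · obtain ⟨t, rfl⟩ : ∃ t, m = k + 1 + t := ⟨m - (k + 1), by omega⟩
      have h1 := ih (k := k) (by omega)
      have h2 := ih (k := k + 1) (by omega)
      rw [show k + 1 + t - k = t + 1 by omega, qPoch_succ q q t] at h1
      rw [Nat.add_sub_cancel_left, qPoch_succ q q k] at h2
      rw [show k + 1 + t + 1 - (k + 1) = t + 1 by omega, qbinom_succ_succ, qPoch_succ q q k,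
        qPoch_succ q q t, qPoch_succ q q (k + 1 + t)]
      linear_combination (1 - q * q ^ k) * h1 + q ^ (k + 1) * (1 - q * q ^ t) * h2
    · obtain rfl : k = m := by omega
      simp

lemma qbinom_mul_qPoch_reindex (m n k j : ℕ) :
    qbinom q m k * qbinom q n k * qPoch q q k *
        (qbinom q (m - k) j * qbinom q (n - k) j * qPoch q q j) =
      qbinom q m (k + j) * qbinom q n (k + j) * qPoch q q (k + j) * qbinom q (k + j) k := by
  have hm := qbinom_mul_qbinom_sub q m k j
  have hn := qbinom_mul_qbinom_sub q n k j
  have hs := qbinom_mul_qPoch_mul_qPoch q (Nat.le_add_right k j)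
  rw [Nat.add_sub_cancel_left] at hs
  linear_combination
    (qbinom q n k * qbinom q (n - k) j * qPoch q q k * qPoch q q j) * hm +
      (qbinom q m (k + j) * qbinom q (k + j) k * qPoch q q k * qPoch q q j) * hn +
      (qbinom q m (k + j) * qbinom q n (k + j) * qbinom q (k + j) k) * hs

/-- Rothe's q-binomial theorem. -/
lemma sum_antidiagonal_qbinom_mul_pow (x : ℂ) (n : ℕ) :
    ∑ p ∈ antidiagonal n, qbinom q n p.1 * q ^ p.2.choose 2 * x ^ p.2 =
      ∏ i ∈ range n, (1 + x * q ^ i) := by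
  induction n with
  | zero => simp
  | succ n ih =>
    have shifted : ∑ p ∈ antidiagonal (n + 1), q ^ p.1 * qbinom q n p.1 * q ^ p.2.choose 2 * x ^ p.2
        = x * q ^ n * ∑ p ∈ antidiagonal n, qbinom q n p.1 * q ^ p.2.choose 2 * x ^ p.2 := by
      rw [Nat.sum_antidiagonal_succ', qbinom_eq_zero_of_lt q (Nat.lt_succ_self n), mul_zero,
        zero_mul, zero_mul, zero_add, mul_sum]
      refine sum_congr rfl fun ⟨a, b⟩ hab => ?_
      obtain rfl : a + b = n := mem_antidiagonal.mp hab
      rw [Nat.choose_succ_succ', Nat.choose_one_right]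
      ring
    rw [Nat.sum_antidiagonal_succ] at shifted
    rw [prod_range_succ, ← ih, Nat.sum_antidiagonal_succ]
    simp only [qbinom_succ_succ, qbinom_zero_right, add_mul, sum_add_distrib] at shifted ⊢
    linear_combination shifted

end QBinomial

theorem stmt13 (m n : ℕ) (z1 z2 q : ℂ) :
    z1 ^ m * z2 ^ n =
      ∑ k ∈ Finset.range (min m n + 1),
        qbinom q m k * qbinom q n k * qPoch q q k * H2D q z1 z2 (m - k) (n - k) := by
  set T : ℕ → ℕ → ℂ := fun k j => qbinom q m k * qbinom q n k * qPoch q q k *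
    (qbinom q (m - k) j * qbinom q (n - k) j * (-1) ^ j * q ^ j.choose 2 * qPoch q q j *
      z1 ^ (m - k - j) * z2 ^ (n - k - j)) with hT
  have expand : ∀ k ∈ range (min m n + 1),
      qbinom q m k * qbinom q n k * qPoch q q k * H2D q z1 z2 (m - k) (n - k) =
        ∑ j ∈ range (min m n + 1 - k), T k j := by
    intro k hk
    rw [mem_range] at hk
    rw [H2D, show min (m - k) (n - k) + 1 = min m n + 1 - k by omega, mul_sum]
  have collect : ∀ s ∈ range (min m n + 1), ∑ k ∈ range (s + 1), T k (s - k) =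
      qbinom q m s * qbinom q n s * qPoch q q s * z1 ^ (m - s) * z2 ^ (n - s) *
        ∏ i ∈ range s, (1 + (-1) * q ^ i) := by
    intro s _
    rw [← Nat.sum_antidiagonal_eq_sum_range_succ T s, ← sum_antidiagonal_qbinom_mul_pow, mul_sum]
    refine sum_congr rfl fun ⟨k, j⟩ hkj => ?_
    obtain rfl : k + j = s := mem_antidiagonal.mp hkj
    simp only [hT, Nat.sub_sub]
    linear_combination ((-1) ^ j * q ^ j.choose 2 * z1 ^ (m - (k + j)) * z2 ^ (n - (k + j))) *
      qbinom_mul_qPoch_reindex q m n k j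
  have vanish (s : ℕ) : ∏ i ∈ range (s + 1), (1 + (-1) * q ^ i) = 0 :=
    prod_eq_zero (mem_range.mpr s.succ_pos) (by simp)
  rw [sum_congr rfl expand, ← sum_range_diag_flip, sum_congr rfl collect, sum_range_succ']
  simp only [vanish, mul_zero, sum_const_zero]
  simp
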